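/- arXiv:1810.12037 — 2 statements merged into one kernel-verified Lean document; each statement's English description precedes it below -/
import Mathlib

section
/- Let L be a finite-dimensional complex Lie algebra with a nondegenerate symmetric ℂ-bilinear form B, let g be a real slice of (L,B), and suppose there exists a compact real form u of (L,B). Then there exists a Cartan involution of Lie algebras θ : g → g of the restriction of B to g. -/
/-!
Setup: a finite-dimensional complex Lie algebra `L` with a nondegenerate symmetric
`ℂ`-bilinear form `B` (a "holomorphic inner product"), viewed also as a real Lie algebra.
-/

variable {L : Type*} [LieRing L] [LieAlgebra ℂ L]

/-- A complex Lie algebra is in particular a real Lie algebra. -/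
noncomputable instance instLieAlgebraRealOfComplex : LieAlgebra ℝ L :=
  { (inferInstance : Module ℝ L) with
    lie_smul := fun t x y => by
      rw [show t • y = (t : ℂ) • y from rfl, lie_smul,
        show (t : ℂ) • ⁅x, y⁆ = t • ⁅x, y⁆ from rfl] }

/-- `g` is a real form of the complex Lie algebra `L`:
`g ∩ i • g = {0}` and `g + i • g = L`. -/
def IsRealForm (g : LieSubalgebra ℝ L) : Prop :=
  (∀ x ∈ g, ∀ y ∈ g, x = Complex.I • y → x = 0) ∧
  (∀ z : L, ∃ x ∈ g, ∃ y ∈ g, z = x + Complex.I • y)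

/-- `g` is a real slice of `(L, B)`: a real form of `L` on which `B` is real-valued. -/
def IsRealSlice (B : LinearMap.BilinForm ℂ L) (g : LieSubalgebra ℝ L) : Prop :=
  IsRealForm g ∧ ∀ x ∈ g, ∀ y ∈ g, (B x y).im = 0

/-- A compact real form of `(L, B)`: a real slice on which `B` is positive definite. -/
def IsCompactRealForm (B : LinearMap.BilinForm ℂ L) (u : LieSubalgebra ℝ L) : Prop :=
  IsRealSlice B u ∧ ∀ x ∈ u, x ≠ 0 → 0 < (B x x).re

/-- A Cartan involution of the metric `B|g`: an `ℝ`-linear involution `θ` of `g` such that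
`(x, y) ↦ B x (θ y)` is a positive-definite (real-valued, symmetric) inner product on `g`. -/
def IsCartanInvolutionOfMetric (B : LinearMap.BilinForm ℂ L) (g : LieSubalgebra ℝ L)
    (θ : ↥g →ₗ[ℝ] ↥g) : Prop :=
  (∀ x, θ (θ x) = x) ∧
  (∀ x y : ↥g, B (θ x : L) (y : L) = B (x : L) (θ y : L)) ∧
  (∀ x : ↥g, x ≠ 0 → 0 < (B (x : L) (θ x : L)).re)

/-- A Cartan involution of Lie algebras of the metric `B|g`: a Cartan involution of the
metric which is moreover a Lie algebra automorphism of `g`. -/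
def IsCartanInvolutionOfLieAlgebras (B : LinearMap.BilinForm ℂ L) (g : LieSubalgebra ℝ L)
    (θ : ↥g →ₗ[ℝ] ↥g) : Prop :=
  IsCartanInvolutionOfMetric B g θ ∧ ∀ x y : ↥g, θ ⁅x, y⁆ = ⁅θ x, θ y⁆

/-!
Let `σ` and `τ` be the conjugations of `L` with respect to `g` and `u`. Then
`⟪x, y⟫ = B y (τ x)` is a Hermitian inner product for which `P = σ τ` is self-adjoint, so
`Q = P²` is diagonalizable with positive eigenvalues. Its real powers `Q ^ t` are Lie
automorphisms preserving `B` with `σ Q ^ t σ = Q ^ (-t)`, and `P` commutes with them; hence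
`τ' = Q ^ (1/4) τ Q ^ (-1/4)` is again the conjugation of a compact real form and it commutes
with `σ`. Then `τ'` preserves `g = Fix σ`, and its restriction is the Cartan involution.
-/

open ComplexConjugate

section ConjLinear

variable {V W : Type*} [AddCommGroup V] [Module ℂ V] [AddCommGroup W] [Module ℂ W]

lemma Complex.smul_eq_re_smul_add_im_smul_I_smul (c : ℂ) (z : V) :
    c • z = c.re • z + c.im • (Complex.I • z) := by
  rw [← Complex.coe_smul, ← Complex.coe_smul, smul_smul, ← add_smul, Complex.re_add_im]

def LinearMap.toConjLinear (F : V →ₗ[ℝ] W) (hF : ∀ z, F (Complex.I • z) = -(Complex.I • F z)) :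
    V →ₗ⋆[ℂ] W where
  toFun := F
  map_add' := F.map_add
  map_smul' c z := by
    rw [Complex.smul_eq_re_smul_add_im_smul_I_smul c z, map_add, F.map_smul, F.map_smul, hF,
      Complex.smul_eq_re_smul_add_im_smul_I_smul (conj c)]
    simp only [Complex.conj_re, Complex.conj_im, smul_neg, neg_smul]

lemma LinearMap.map_real_smul_of_conjLinear (τ : V →ₗ⋆[ℂ] W) (r : ℝ) (z : V) :
    τ (r • z) = r • τ z := by
  rw [← Complex.coe_smul, τ.map_smulₛₗ, Complex.conj_ofReal, Complex.coe_smul]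

end ConjLinear

namespace Module.Basis

variable {ι V : Type*} [AddCommGroup V] [Module ℂ V] (b : Basis ι ℂ V) (μ : ι → ℝ)

/-- The real power `Q ^ t` of the operator `Q` that is diagonal in `b` with eigenvalues `μ`. -/
noncomputable def diagRpow (t : ℝ) : V →ₗ[ℂ] V :=
  b.constr ℂ fun i => (μ i ^ t) • b i

@[simp]
lemma diagRpow_apply_self (t : ℝ) (i : ι) : b.diagRpow μ t (b i) = (μ i ^ t) • b i :=
  b.constr_basis ℂ _ i

lemma repr_apply_of_apply_self_eq_smul {D : V →ₗ[ℂ] V} {d : ι → ℂ}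
    (hD : ∀ i, D (b i) = d i • b i) (w : V) (i : ι) :
    b.repr (D w) i = d i * b.repr w i := by
  have : b.coord i ∘ₗ D = d i • b.coord i := b.ext fun j => by
    by_cases h : j = i
    · subst h; simp [hD]
    · simp [hD, Ne.symm h]
  exact LinearMap.congr_fun this w

lemma diagRpow_zero : b.diagRpow μ 0 = LinearMap.id :=
  b.ext fun i => by simp

variable {b μ} {Q : V →ₗ[ℂ] V}

lemma diagRpow_apply_of_apply_eq_smul {w : V} {c : ℝ} (hQ : ∀ i, Q (b i) = μ i • b i)
    (hw : Q w = c • w) (t : ℝ) :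
    b.diagRpow μ t w = (c ^ t) • w := by
  have hQ' : ∀ i, Q (b i) = (μ i : ℂ) • b i := fun i => by rw [hQ, Complex.coe_smul]
  have hrpow : ∀ i, b.diagRpow μ t (b i) = ((μ i ^ t : ℝ) : ℂ) • b i := fun i => by
    rw [diagRpow_apply_self, Complex.coe_smul]
  refine b.ext_elem fun i => ?_
  have hcoord := b.repr_apply_of_apply_self_eq_smul hQ' w i
  rw [hw, ← Complex.coe_smul, map_smul, Finsupp.smul_apply, smul_eq_mul] at hcoord
  rw [b.repr_apply_of_apply_self_eq_smul hrpow, ← Complex.coe_smul, map_smul,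
    Finsupp.smul_apply, smul_eq_mul]
  rcases eq_or_ne (b.repr w i) 0 with h | h
  · simp [h]
  · rw [Complex.ofReal_inj.mp (mul_right_cancel₀ h hcoord).symm]

lemma diagRpow_one (hQ : ∀ i, Q (b i) = μ i • b i) : b.diagRpow μ 1 = Q :=
  b.ext fun i => by rw [diagRpow_apply_self, Real.rpow_one, hQ]

lemma diagRpow_comp_of_comp_eq (hQ : ∀ i, Q (b i) = μ i • b i)
    {A : V →ₗ[ℂ] V} (hA : A ∘ₗ Q = Q ∘ₗ A) (t : ℝ) :
    A ∘ₗ b.diagRpow μ t = b.diagRpow μ t ∘ₗ A := b.ext fun i => by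
  have : Q (A (b i)) = μ i • A (b i) := by
    rw [← LinearMap.comp_apply, ← hA, LinearMap.comp_apply, hQ, LinearMap.map_smul_of_tower]
  simp [diagRpow_apply_of_apply_eq_smul hQ this, LinearMap.map_smul_of_tower]

lemma diagRpow_add (hμ : ∀ i, 0 < μ i) (s t : ℝ) :
    b.diagRpow μ (s + t) = b.diagRpow μ s ∘ₗ b.diagRpow μ t := b.ext fun i => by
  simp [LinearMap.map_smul_of_tower, smul_smul, Real.rpow_add (hμ i), mul_comm]

lemma diagRpow_apply_diagRpow_neg (hμ : ∀ i, 0 < μ i) (t : ℝ) (z : V) :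
    b.diagRpow μ t (b.diagRpow μ (-t) z) = z := by
  rw [← LinearMap.comp_apply, ← diagRpow_add hμ, add_neg_cancel, diagRpow_zero,
    LinearMap.id_apply]

lemma diagRpow_map_bilin (hQ : ∀ i, Q (b i) = μ i • b i) (hμ : ∀ i, 0 < μ i)
    (β : V →ₗ[ℂ] V →ₗ[ℂ] V) (hβ : ∀ x y, Q (β x y) = β (Q x) (Q y)) (t : ℝ) (x y : V) :
    b.diagRpow μ t (β x y) = β (b.diagRpow μ t x) (b.diagRpow μ t y) := by
  have hβb : ∀ i j, Q (β (b i) (b j)) = (μ i * μ j) • β (b i) (b j) := fun i j => by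
    simp [hβ, hQ, LinearMap.map_smul_of_tower, smul_smul]
  have : (β.compr₂ (b.diagRpow μ t)) = (β.compl₁₂ (b.diagRpow μ t) (b.diagRpow μ t)) :=
    LinearMap.ext_basis b b fun i j => by
      simp [diagRpow_apply_of_apply_eq_smul hQ (hβb i j), LinearMap.map_smul_of_tower,
        smul_smul, Real.mul_rpow (hμ i).le (hμ j).le]
  exact LinearMap.congr_fun₂ this x y

lemma diagRpow_bilin_invariant {M : Type*} [AddCommGroup M] [Module ℂ M]
    (hQ : ∀ i, Q (b i) = μ i • b i) (hμ : ∀ i, 0 < μ i)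
    (β : V →ₗ[ℂ] V →ₗ[ℂ] M) (hβ : ∀ x y, β (Q x) (Q y) = β x y) (t : ℝ) (x y : V) :
    β (b.diagRpow μ t x) (b.diagRpow μ t y) = β x y := by
  have : β.compl₁₂ (b.diagRpow μ t) (b.diagRpow μ t) = β := LinearMap.ext_basis b b fun i j => by
    have h : (μ i * μ j) • β (b i) (b j) = β (b i) (b j) := by
      simpa [hQ, LinearMap.map_smul_of_tower, smul_smul, mul_comm] using hβ (b i) (b j)
    by_cases h1 : μ i * μ j = 1
    · simp [LinearMap.map_smul_of_tower, smul_smul, ← Real.mul_rpow (hμ i).le (hμ j).le, h1]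
    · have h0 : β (b i) (b j) = 0 := by
        have : (μ i * μ j - 1) • β (b i) (b j) = 0 := by rw [sub_smul, h, one_smul, sub_self]
        exact (smul_eq_zero.mp this).resolve_left (sub_ne_zero.mpr h1)
      simp [LinearMap.map_smul_of_tower, h0]
  exact LinearMap.congr_fun₂ this x y

lemma diagRpow_apply_conjLinear (hQ : ∀ i, Q (b i) = μ i • b i) (hμ : ∀ i, 0 < μ i)
    (σ : V →ₗ⋆[ℂ] V) (hσ : ∀ z, Q (σ (Q z)) = σ z) (t : ℝ) (z : V) :
    b.diagRpow μ t (σ z) = σ (b.diagRpow μ (-t) z) := by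
  have hσb : ∀ i, Q (σ (b i)) = (μ i)⁻¹ • σ (b i) := fun i => by
    have h := hσ (b i)
    rw [hQ, σ.map_real_smul_of_conjLinear, LinearMap.map_smul_of_tower] at h
    rwa [eq_inv_smul_iff₀ (hμ i).ne']
  have : (b.diagRpow μ t).comp σ = σ.comp (b.diagRpow μ (-t)) := b.ext fun i => by
    simp [diagRpow_apply_of_apply_eq_smul hQ (hσb i), σ.map_real_smul_of_conjLinear,
      Real.inv_rpow (hμ i).le, Real.rpow_neg (hμ i).le]
  exact LinearMap.congr_fun this z

end Module.Basis

structure IsConjugation (B : LinearMap.BilinForm ℂ L) (σ : L →ₗ⋆[ℂ] L) : Prop where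
  involutive : ∀ z, σ (σ z) = z
  map_lie : ∀ x y, σ ⁅x, y⁆ = ⁅σ x, σ y⁆
  map_form : ∀ x y, B (σ x) (σ y) = conj (B x y)

structure IsCompactConjugation (B : LinearMap.BilinForm ℂ L) (τ : L →ₗ⋆[ℂ] L) : Prop
    extends IsConjugation B τ where
  re_pos : ∀ z, z ≠ 0 → 0 < (B z (τ z)).re

namespace IsRealForm

variable {g : LieSubalgebra ℝ L}

lemma eq_zero_of_add_I_smul_eq_zero (hg : IsRealForm g) {x y : L} (hx : x ∈ g) (hy : y ∈ g)
    (h : x + Complex.I • y = 0) : x = 0 ∧ y = 0 := by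
  have hx0 : x = 0 := hg.1 x hx (-y) (neg_mem hy) (by rw [smul_neg, eq_neg_iff_add_eq_zero, h])
  rw [hx0, zero_add, smul_eq_zero] at h
  exact ⟨hx0, h.resolve_left Complex.I_ne_zero⟩

lemma exists_conjLinear (hg : IsRealForm g) :
    ∃ σ : L →ₗ⋆[ℂ] L, ∀ x ∈ g, ∀ y ∈ g, σ (x + Complex.I • y) = x - Complex.I • y := by
  let S := g.toSubmodule
  let smulI : L →ₗ[ℝ] L := (LinearMap.lsmul ℂ L Complex.I).restrictScalars ℝ
  let F : S × S →ₗ[ℝ] L := S.subtype.coprod (smulI ∘ₗ S.subtype)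
  have hF : Function.Bijective F := by
    refine ⟨injective_iff_map_eq_zero F |>.mpr fun p hp => ?_, fun z => ?_⟩
    · obtain ⟨h1, h2⟩ := hg.eq_zero_of_add_I_smul_eq_zero p.1.2 p.2.2 hp
      exact Prod.ext (Subtype.ext h1) (Subtype.ext h2)
    · obtain ⟨x, hx, y, hy, rfl⟩ := hg.2 z
      exact ⟨(⟨x, hx⟩, ⟨y, hy⟩), rfl⟩
  let e := LinearEquiv.ofBijective F hF
  let σ₀ : L →ₗ[ℝ] L := S.subtype.coprod (-(smulI ∘ₗ S.subtype)) ∘ₗ e.symm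
  have hσ₀ : ∀ x ∈ g, ∀ y ∈ g, σ₀ (x + Complex.I • y) = x - Complex.I • y := by
    intro x hx y hy
    have : e.symm (x + Complex.I • y) = (⟨x, hx⟩, ⟨y, hy⟩) := e.symm_apply_eq.mpr rfl
    simp [σ₀, this, sub_eq_add_neg, smulI]
  have hσ₀I : ∀ z, σ₀ (Complex.I • z) = -(Complex.I • σ₀ z) := by
    intro z
    obtain ⟨x, hx, y, hy, rfl⟩ := hg.2 z
    have : Complex.I • (x + Complex.I • y) = -y + Complex.I • x := by
      rw [smul_add, smul_smul, Complex.I_mul_I, neg_one_smul, add_comm]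
    rw [this, hσ₀ _ (neg_mem hy) _ hx, hσ₀ _ hx _ hy, smul_sub, smul_smul, Complex.I_mul_I,
      neg_one_smul]
    abel
  exact ⟨σ₀.toConjLinear hσ₀I, hσ₀⟩

end IsRealForm

section ConjugationOfRealForm

variable {B : LinearMap.BilinForm ℂ L} {g : LieSubalgebra ℝ L} {σ : L →ₗ⋆[ℂ] L}

lemma IsRealForm.conj_apply_eq_self_iff (hg : IsRealForm g)
    (hσ : ∀ x ∈ g, ∀ y ∈ g, σ (x + Complex.I • y) = x - Complex.I • y) (z : L) :
    σ z = z ↔ z ∈ g := by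
  refine ⟨fun h => ?_, fun hz => by simpa using hσ z hz 0 (zero_mem g)⟩
  obtain ⟨x, hx, y, hy, rfl⟩ := hg.2 z
  rw [hσ x hx y hy, sub_eq_add_neg, add_right_inj, neg_eq_iff_add_eq_zero, ← two_smul ℂ,
    smul_eq_zero, smul_eq_zero] at h
  simpa [(h.resolve_left two_ne_zero).resolve_left Complex.I_ne_zero] using hx

lemma IsRealSlice.isConjugation (hg : IsRealSlice B g)
    (hσ : ∀ x ∈ g, ∀ y ∈ g, σ (x + Complex.I • y) = x - Complex.I • y) :
    IsConjugation B σ where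
  involutive z := by
    obtain ⟨x, hx, y, hy, rfl⟩ := hg.1.2 z
    rw [hσ x hx y hy, sub_eq_add_neg, ← smul_neg, hσ x hx (-y) (neg_mem hy), smul_neg,
      sub_neg_eq_add]
  map_lie z w := by
    obtain ⟨x, hx, y, hy, rfl⟩ := hg.1.2 z
    obtain ⟨x', hx', y', hy', rfl⟩ := hg.1.2 w
    have hbracket : ⁅x + Complex.I • y, x' + Complex.I • y'⁆ =
        (⁅x, x'⁆ - ⁅y, y'⁆) + Complex.I • (⁅x, y'⁆ + ⁅y, x'⁆) := by
      simp only [lie_add, add_lie, lie_smul, smul_lie, smul_add, smul_smul, Complex.I_mul_I,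
        neg_one_smul]
      abel
    rw [hbracket, hσ _ (sub_mem (g.lie_mem hx hx') (g.lie_mem hy hy'))
      _ (add_mem (g.lie_mem hx hy') (g.lie_mem hy hx')), hσ x hx y hy, hσ x' hx' y' hy']
    simp only [lie_sub, sub_lie, lie_smul, smul_lie, smul_sub, smul_smul, Complex.I_mul_I,
      neg_one_smul]
    module
  map_form z w := by
    obtain ⟨x, hx, y, hy, rfl⟩ := hg.1.2 z
    obtain ⟨x', hx', y', hy', rfl⟩ := hg.1.2 w
    have hreal : ∀ a ∈ g, ∀ b ∈ g, conj (B a b) = B a b := fun a ha b hb =>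
      Complex.conj_eq_iff_im.mpr (hg.2 a ha b hb)
    rw [hσ x hx y hy, hσ x' hx' y' hy']
    simp only [map_add, map_sub, map_smul, LinearMap.add_apply, LinearMap.sub_apply,
      LinearMap.smul_apply, smul_eq_mul, map_mul, Complex.conj_I, hreal x hx x' hx',
      hreal x hx y' hy', hreal y hy x' hx', hreal y hy y' hy']
    ring

lemma IsCompactRealForm.isCompactConjugation (hg : IsCompactRealForm B g)
    (hσ : ∀ x ∈ g, ∀ y ∈ g, σ (x + Complex.I • y) = x - Complex.I • y) :
    IsCompactConjugation B σ where
  toIsConjugation := hg.1.isConjugation hσ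
  re_pos z hz := by
    obtain ⟨x, hx, y, hy, rfl⟩ := hg.1.1.2 z
    have hre :
        (B (x + Complex.I • y) (σ (x + Complex.I • y))).re = (B x x).re + (B y y).re := by
      rw [hσ x hx y hy]
      simp [Complex.mul_re, hg.1.2 x hx y hy, hg.1.2 y hy x hx]
    have hpos : ∀ w ∈ g, 0 ≤ (B w w).re := fun w hw => by
      rcases eq_or_ne w 0 with rfl | hw0
      · simp
      · exact (hg.2 w hw hw0).le
    rw [hre]
    rcases eq_or_ne x 0 with rfl | hx0
    · have hy0 : y ≠ 0 := by rintro rfl; simp at hz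
      simpa using hg.2 y hy hy0
    · linarith [hg.2 x hx hx0, hpos y hy]

end ConjugationOfRealForm

namespace IsConjugation

variable {B : LinearMap.BilinForm ℂ L} {σ τ : L →ₗ⋆[ℂ] L}

lemma form_comp_apply_conj (hσ : IsConjugation B σ) (hτ : IsConjugation B τ) (x y : L) :
    B (σ (τ x)) (τ y) = B x (τ (σ (τ y))) := by
  calc B (σ (τ x)) (τ y) = B (σ (τ x)) (σ (σ (τ y))) := by rw [hσ.involutive]
    _ = conj (B (τ x) (τ (τ (σ (τ y))))) := by rw [hσ.map_form, hτ.involutive]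
    _ = B x (τ (σ (τ y))) := by rw [hτ.map_form, Complex.conj_conj]

lemma comp_sq_map_lie (hσ : IsConjugation B σ) (hτ : IsConjugation B τ) (x y : L) :
    ((σ.comp τ) ∘ₗ (σ.comp τ)) ⁅x, y⁆ =
      ⁅((σ.comp τ) ∘ₗ (σ.comp τ)) x, ((σ.comp τ) ∘ₗ (σ.comp τ)) y⁆ := by
  simp [hσ.map_lie, hτ.map_lie]

lemma comp_sq_map_form (hσ : IsConjugation B σ) (hτ : IsConjugation B τ) (x y : L) :
    B (((σ.comp τ) ∘ₗ (σ.comp τ)) x) (((σ.comp τ) ∘ₗ (σ.comp τ)) y) = B x y := by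
  simp [hσ.map_form, hτ.map_form]

lemma comp_sq_apply_apply_comp_sq (hσ : IsConjugation B σ) (hτ : IsConjugation B τ) (z : L) :
    ((σ.comp τ) ∘ₗ (σ.comp τ)) (σ (((σ.comp τ) ∘ₗ (σ.comp τ)) z)) = σ z := by
  simp [hσ.involutive, hτ.involutive]

end IsConjugation

namespace IsCompactConjugation

variable {B : LinearMap.BilinForm ℂ L} {σ τ : L →ₗ⋆[ℂ] L}

abbrev innerProductCore (hB : ∀ x y, B x y = B y x) (hτ : IsCompactConjugation B τ) :
    InnerProductSpace.Core ℂ L where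
  inner x y := B y (τ x)
  conj_inner_symm x y := by
    rw [← hτ.map_form, hτ.involutive, hB]
  re_inner_nonneg x := by
    rcases eq_or_ne x 0 with rfl | hx
    · simp
    · exact (hτ.re_pos x hx).le
  add_left x y z := by simp only [map_add]
  smul_left x y r := by simp only [map_smulₛₗ, smul_eq_mul, RingHom.id_apply]
  definite x hx := by
    by_contra h
    have := hτ.re_pos x h
    simp_all

lemma exists_basis_apply_comp_sq_eq_smul [FiniteDimensional ℂ L] (hB : ∀ x y, B x y = B y x)
    (hσ : IsConjugation B σ) (hτ : IsCompactConjugation B τ) :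
    ∃ (n : ℕ) (b : Module.Basis (Fin n) ℂ L) (μ : Fin n → ℝ),
      (∀ i, ((σ.comp τ) ∘ₗ (σ.comp τ)) (b i) = μ i • b i) ∧ ∀ i, 0 < μ i := by
  let core := hτ.innerProductCore hB
  let : NormedAddCommGroup L := core.toNormedAddCommGroup
  let : InnerProductSpace ℂ L := InnerProductSpace.ofCore core.toCore
  have hinner : ∀ x y : L, inner ℂ x y = B y (τ x) := fun _ _ => rfl
  set P := σ.comp τ
  have hP : P.IsSymmetric := fun x y => by
    simp only [hinner]
    exact (hσ.form_comp_apply_conj hτ.toIsConjugation y x).symm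
  have hQ : (P ∘ₗ P).IsSymmetric := fun x y => by
    rw [LinearMap.comp_apply, hP, hP]
    rfl
  refine ⟨_, (hQ.eigenvectorBasis rfl).toBasis, hQ.eigenvalues rfl, fun i => ?_, fun i => ?_⟩
  · rw [OrthonormalBasis.coe_toBasis, hQ.apply_eigenvectorBasis]
    exact Complex.coe_smul _ _
  · set v := hQ.eigenvectorBasis rfl i
    have hPv : P v ≠ 0 := fun h => by
      have : τ (σ (P v)) = v := by simp [P, hσ.involutive, hτ.involutive]
      rw [h, map_zero, map_zero] at this
      exact (hQ.eigenvectorBasis rfl).orthonormal.ne_zero i this.symm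
    have hμ : (hQ.eigenvalues rfl i : ℂ) = inner ℂ (P v) (P v) := by
      rw [hP, ← LinearMap.comp_apply, hQ.apply_eigenvectorBasis, inner_smul_right,
        inner_self_eq_norm_sq_to_K, (hQ.eigenvectorBasis rfl).orthonormal.1 i]
      simp
    have := hτ.re_pos (P v) hPv
    rwa [← hinner, ← hμ, Complex.ofReal_re] at this

lemma conj_linearEquiv (hτ : IsCompactConjugation B τ) (φ : L ≃ₗ[ℂ] L)
    (hφ_lie : ∀ x y, φ ⁅x, y⁆ = ⁅φ x, φ y⁆) (hφ_form : ∀ x y, B (φ x) (φ y) = B x y) :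
    IsCompactConjugation B ((φ : L →ₗ[ℂ] L).comp (τ.comp (φ.symm : L →ₗ[ℂ] L))) := by
  have hφ_symm_lie : ∀ x y, φ.symm ⁅x, y⁆ = ⁅φ.symm x, φ.symm y⁆ := fun x y =>
    φ.symm_apply_eq.mpr (by rw [hφ_lie, φ.apply_symm_apply, φ.apply_symm_apply])
  have hφ_symm_form : ∀ x y, B (φ.symm x) (φ.symm y) = B x y := fun x y => by
    rw [← hφ_form, φ.apply_symm_apply, φ.apply_symm_apply]
  refine ⟨⟨fun z => ?_, fun x y => ?_, fun x y => ?_⟩, fun z hz => ?_⟩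
  · simp [hτ.involutive]
  · simp [hφ_symm_lie, hτ.map_lie, hφ_lie]
  · simp [hφ_form, hτ.map_form, hφ_symm_form]
  · have := hτ.re_pos (φ.symm z) (by simpa using hz)
    rwa [← hφ_form, φ.apply_symm_apply] at this

lemma exists_isCompactConjugation_commute [FiniteDimensional ℂ L] (hB : ∀ x y, B x y = B y x)
    (hσ : IsConjugation B σ) (hτ : IsCompactConjugation B τ) :
    ∃ τ' : L →ₗ⋆[ℂ] L, IsCompactConjugation B τ' ∧ ∀ z, σ (τ' z) = τ' (σ z) := by
  obtain ⟨n, b, μ, hQ, hμ⟩ := hτ.exists_basis_apply_comp_sq_eq_smul hB hσ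
  set P := σ.comp τ
  have hf_lie := b.diagRpow_map_bilin hQ hμ (LieModule.toEnd ℂ L L)
    (hσ.comp_sq_map_lie hτ.toIsConjugation)
  have hf_form := b.diagRpow_bilin_invariant hQ hμ B (hσ.comp_sq_map_form hτ.toIsConjugation)
  have hf_σ := b.diagRpow_apply_conjLinear hQ hμ σ
    (hσ.comp_sq_apply_apply_comp_sq hτ.toIsConjugation)
  have hf_P : ∀ t z, P (b.diagRpow μ t z) = b.diagRpow μ t (P z) :=
    fun t => LinearMap.congr_fun (b.diagRpow_comp_of_comp_eq hQ (A := P) rfl t)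
  have hf_add : ∀ s t z, b.diagRpow μ s (b.diagRpow μ t z) = b.diagRpow μ (s + t) z :=
    fun s t z => by rw [b.diagRpow_add hμ, LinearMap.comp_apply]
  have hτσ : ∀ y, τ (σ y) = P (b.diagRpow μ (-1) y) := fun y => by
    conv_lhs => rw [← b.diagRpow_apply_diagRpow_neg hμ 1 y, b.diagRpow_one hQ]
    simp [P, hσ.involutive, hτ.involutive]
  have hf_inv : ∀ t, b.diagRpow μ t ∘ₗ b.diagRpow μ (-t) = LinearMap.id := fun t => by
    rw [← b.diagRpow_add hμ, add_neg_cancel, Module.Basis.diagRpow_zero]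
  let φ : L ≃ₗ[ℂ] L := LinearEquiv.ofLinearMap _ _ (hf_inv (1 / 4))
    (by simpa using hf_inv (-(1 / 4)))
  refine ⟨_, hτ.conj_linearEquiv φ (hf_lie (1 / 4)) (hf_form (1 / 4)), fun z => ?_⟩
  -- with `Q = P²`, both sides equal `P Q^{-1/2} z`: this is what fixes the exponent `1/4`
  change σ (b.diagRpow μ (1 / 4) (τ (b.diagRpow μ (-(1 / 4)) z))) =
    b.diagRpow μ (1 / 4) (τ (b.diagRpow μ (-(1 / 4)) (σ z)))
  calc σ (b.diagRpow μ (1 / 4) (τ (b.diagRpow μ (-(1 / 4)) z)))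
      = b.diagRpow μ (-(1 / 4)) (σ (τ (b.diagRpow μ (-(1 / 4)) z))) := by rw [hf_σ, neg_neg]
    _ = P (b.diagRpow μ (-(1 / 4)) (b.diagRpow μ (-(1 / 4)) z)) := (hf_P _ _).symm
    _ = P (b.diagRpow μ (1 / 4) (b.diagRpow μ (-1) (b.diagRpow μ (1 / 4) z))) := by
      rw [hf_add, hf_add, hf_add]; norm_num
    _ = b.diagRpow μ (1 / 4) (τ (σ (b.diagRpow μ (1 / 4) z))) := by rw [hf_P, hτσ]
    _ = b.diagRpow μ (1 / 4) (τ (b.diagRpow μ (-(1 / 4)) (σ z))) := by rw [hf_σ, neg_neg]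

lemma exists_isCartanInvolutionOfLieAlgebras {g : LieSubalgebra ℝ L}
    (hg : IsRealSlice B g) (hσg : ∀ z, σ z = z ↔ z ∈ g) (hτ : IsCompactConjugation B τ)
    (hστ : ∀ z, σ (τ z) = τ (σ z)) :
    ∃ θ : ↥g →ₗ[ℝ] ↥g, IsCartanInvolutionOfLieAlgebras B g θ := by
  have hτg : ∀ x ∈ g, τ x ∈ g := fun x hx => by
    rw [← hσg, hστ, (hσg x).mpr hx]
  let θ : ↥g →ₗ[ℝ] ↥g :=
    { toFun x := ⟨τ x, hτg x x.2⟩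
      map_add' x y := Subtype.ext (map_add τ (x : L) y)
      map_smul' r x := Subtype.ext (τ.map_real_smul_of_conjLinear r (x : L)) }
  refine ⟨θ, ⟨fun x => Subtype.ext (hτ.involutive (x : L)), fun x y => ?_, fun x hx => ?_⟩,
    fun x y => Subtype.ext (hτ.map_lie (x : L) y)⟩
  · change B (τ x) y = B x (τ y)
    rw [← hτ.involutive (y : L), hτ.map_form, hτ.involutive,
      Complex.conj_eq_iff_im.mpr (hg.2 x x.2 _ (hτg y y.2))]
  · exact hτ.re_pos (x : L) (by simpa using hx)

end IsCompactConjugation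

theorem exists_cartanInvolution_of_exists_compactRealForm_general [FiniteDimensional ℂ L]
    (B : LinearMap.BilinForm ℂ L) (hBsymm : ∀ x y : L, B x y = B y x)
    (g u : LieSubalgebra ℝ L)
    (hg : IsRealSlice B g) (hu : IsCompactRealForm B u) :
    ∃ θ : ↥g →ₗ[ℝ] ↥g, IsCartanInvolutionOfLieAlgebras B g θ := by
  obtain ⟨σ, hσ⟩ := hg.1.exists_conjLinear
  obtain ⟨τ, hτ⟩ := hu.1.1.exists_conjLinear
  obtain ⟨τ', hτ', hστ'⟩ :=
    (hu.isCompactConjugation hτ).exists_isCompactConjugation_commute hBsymm (hg.isConjugation hσ)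
  exact hτ'.exists_isCartanInvolutionOfLieAlgebras hg (hg.1.conj_apply_eq_self_iff hσ) hστ'

/-- If `g` is a real slice of `(L, B)` and there exists a compact real form
of `(L, B)`, then there exists a Cartan involution of Lie algebras of `B|g`. -/
theorem exists_cartanInvolution_of_exists_compactRealForm [FiniteDimensional ℂ L]
    (B : LinearMap.BilinForm ℂ L) (hBsymm : ∀ x y : L, B x y = B y x)
    (hBnd : B.Nondegenerate) (g u : LieSubalgebra ℝ L)
    (hg : IsRealSlice B g) (hu : IsCompactRealForm B u) :
    ∃ θ : ↥g →ₗ[ℝ] ↥g, IsCartanInvolutionOfLieAlgebras B g θ :=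
  exists_cartanInvolution_of_exists_compactRealForm_general B hBsymm g u hg hu
end

section
/- Let L be a finite-dimensional complex Lie algebra with a nondegenerate symmetric ℂ-bilinear form B, and let g be a real slice of (L,B). Then there exists a Cartan involution of Lie algebras θ : g → g of the restriction of B to g if and only if there exists a compact real form u of (L,B). -/
/-!
Setup: a finite-dimensional complex Lie algebra `L` with a nondegenerate symmetric
`ℂ`-bilinear form `B` (a "holomorphic inner product"), viewed also as a real Lie algebra.
-/

variable {L : Type*} [LieRing L] [LieAlgebra ℂ L]

/-!
A Cartan involution `θ` of `g` splits `g = k ⊕ p` into its `±1`-eigenspaces, and `u = k ⊕ i p`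
is a compact real form: `B` is real on `u` because `k ⟂ p`, and positive definite because `B` is
positive on `k` and negative on `p`.

Conversely, let `σ` and `τ` be the conjugations of `L` with respect to `g` and to a compact real
form `u`. Then `⟪x, y⟫ = B (τ x) y` is a Hermitian inner product for which `N = σ τ` is a
self-adjoint invertible Lie algebra automorphism preserving `B`. Its sign `S = N |N|⁻¹` is again
such an automorphism; it commutes with `σ` because `σ N σ = N⁻¹`, and for `x ∈ g` we have
`x = N (τ x)`, so `B x (S x) = ⟪τ x, |N| (τ x)⟫ > 0`. Hence `S` restricts to a Cartan involution
of `g`.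
-/

theorem eq_zero_of_eq_neg {R V : Type*} [DivisionRing R] [CharZero R] [AddCommGroup V]
    [Module R V] {v : V} (h : v = -v) : v = 0 := by
  have h2 : (2 : R) • v = 0 := by rw [two_smul]; nth_rewrite 2 [h]; exact add_neg_cancel v
  simpa using h2

theorem LinearMap.exists_add_eq_of_involutive {V : Type*} [AddCommGroup V] [Module ℝ V]
    {θ : V →ₗ[ℝ] V} (hθ : ∀ x, θ (θ x) = x) (x : V) :
    ∃ a b, θ a = a ∧ θ b = -b ∧ a + b = x :=
  ⟨(1 / 2 : ℝ) • (x + θ x), (1 / 2 : ℝ) • (x - θ x), by simp [hθ, add_comm],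
    by simp [hθ, ← smul_neg], by module⟩

theorem sign_inv {α : Type*} [Field α] [LinearOrder α] [IsStrictOrderedRing α] (a : α) :
    SignType.sign a⁻¹ = SignType.sign a := by
  rcases lt_trichotomy a 0 with h | rfl | h
  · rw [sign_neg h, sign_neg (inv_lt_zero.2 h)]
  · rw [inv_zero]
  · rw [sign_pos h, sign_pos (inv_pos.2 h)]

namespace Module.Basis

variable {ι K V : Type*} [Field K] [AddCommGroup V] [Module K V] (b : Basis ι K V)
  {N S : V →ₗ[K] V} {μ : ι → K} {f : K → K}

theorem repr_apply_of_eigenbasis {d : ι → K} (hS : ∀ i, S (b i) = d i • b i) (x : V) (i : ι) :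
    b.repr (S x) i = d i * b.repr x i := by
  have h : b.coord i ∘ₗ S = d i • b.coord i := b.ext fun j => by
    rcases eq_or_ne i j with rfl | hij
    · simp [hS]
    · simp [hS, hij]
  exact LinearMap.congr_fun h x

theorem apply_eq_smul_of_eigenbasis (hN : ∀ i, N (b i) = μ i • b i)
    (hS : ∀ i, S (b i) = f (μ i) • b i) {c : K} {x : V} (hx : N x = c • x) : S x = f c • x := by
  refine b.ext_elem fun i => ?_
  have hi := congr_arg (b.repr · i) hx
  simp only [b.repr_apply_of_eigenbasis hN, map_smul, Finsupp.smul_apply, smul_eq_mul] at hi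
  rw [b.repr_apply_of_eigenbasis hS, map_smul, Finsupp.smul_apply, smul_eq_mul]
  rcases eq_or_ne (b.repr x i) 0 with h | h
  · simp [h]
  · rw [mul_right_cancel₀ h hi]

theorem bilin_apply_apply_of_eigenbasis {M : Type*} [AddCommGroup M] [Module K M]
    (Φ : V →ₗ[K] V →ₗ[K] M) {NM : M → M} {SM : M →ₗ[K] M}
    (hN : ∀ i, N (b i) = μ i • b i) (hS : ∀ i, S (b i) = f (μ i) • b i)
    (hΦ : ∀ x y, Φ (N x) (N y) = NM (Φ x y))
    (hSM : ∀ c m, NM m = c • m → SM m = f c • m)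
    (hf : ∀ i j, f (μ i * μ j) = f (μ i) * f (μ j)) (x y : V) :
    Φ (S x) (S y) = SM (Φ x y) := by
  suffices h : Φ.compl₁₂ S S = Φ.compr₂ SM from LinearMap.congr_fun₂ h x y
  refine b.ext fun i => b.ext fun j => ?_
  have hij : NM (Φ (b i) (b j)) = (μ i * μ j) • Φ (b i) (b j) := by
    rw [← hΦ, hN, hN, map_smul, map_smul, LinearMap.smul_apply, smul_smul, mul_comm]
  simp [hS, hSM _ _ hij, hf, smul_smul, mul_comm]

end Module.Basis

theorem OrthonormalBasis.re_inner_apply_pos_of_eigenbasis {ι 𝕜 E : Type*} [Fintype ι] [RCLike 𝕜]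
    [NormedAddCommGroup E] [InnerProductSpace 𝕜 E] (b : OrthonormalBasis ι 𝕜 E)
    {T : E →ₗ[𝕜] E} {d : ι → ℝ} (hd : ∀ i, 0 < d i) (hT : ∀ i, T (b i) = (d i : 𝕜) • b i)
    {y : E} (hy : y ≠ 0) : 0 < RCLike.re (inner 𝕜 y (T y)) := by
  have hterm : ∀ i, RCLike.re (inner 𝕜 y (b i) * inner 𝕜 (b i) (T y)) =
      d i * ‖inner 𝕜 (b i) y‖ ^ 2 := fun i => by
    have h := b.toBasis.repr_apply_of_eigenbasis (S := T) (d := fun i => (d i : 𝕜))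
      (by simpa using hT) y i
    simp only [OrthonormalBasis.coe_toBasis_repr_apply, b.repr_apply_apply] at h
    rw [h, mul_left_comm, ← inner_conj_symm y, RCLike.conj_mul, ← RCLike.ofReal_pow,
      ← RCLike.ofReal_mul, RCLike.ofReal_re]
  rw [← b.sum_inner_mul_inner, map_sum]
  simp only [hterm]
  obtain ⟨i, hi⟩ : ∃ i, inner 𝕜 (b i) y ≠ 0 := by
    by_contra! h
    exact hy (by simpa [h] using (b.sum_repr' y).symm)
  exact Finset.sum_pos' (fun j _ => mul_nonneg (hd j).le (sq_nonneg _))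
    ⟨i, Finset.mem_univ i, mul_pos (hd i) (pow_pos (norm_pos_iff.2 hi) 2)⟩

section SignOperator

variable {𝕜 V : Type*} [RCLike 𝕜] [AddCommGroup V] [Module 𝕜 V]

def IsSignOf (S N : V →ₗ[𝕜] V) : Prop :=
  ∃ (n : ℕ) (b : Module.Basis (Fin n) 𝕜 V) (μ : Fin n → ℝ), (∀ i, μ i ≠ 0) ∧
    (∀ i, N (b i) = (μ i : 𝕜) • b i) ∧ ∀ i, S (b i) = ((SignType.sign (μ i) : ℝ) : 𝕜) • b i

theorem RCLike.sign_re_ofReal_mul (μ ν : ℝ) :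
    ((SignType.sign (RCLike.re ((μ : 𝕜) * ν)) : ℝ) : 𝕜) =
      ((SignType.sign μ : ℝ) : 𝕜) * ((SignType.sign ν : ℝ) : 𝕜) := by
  rw [← RCLike.ofReal_mul, RCLike.ofReal_re, sign_mul, SignType.coe_mul, RCLike.ofReal_mul]

namespace IsSignOf

variable {S N : V →ₗ[𝕜] V}

theorem apply_eq_smul (h : IsSignOf S N) {c : 𝕜} {x : V} (hx : N x = c • x) :
    S x = ((SignType.sign (RCLike.re c) : ℝ) : 𝕜) • x := by
  obtain ⟨n, b, μ, -, hN, hS⟩ := h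
  exact b.apply_eq_smul_of_eigenbasis (f := fun c => ((SignType.sign (RCLike.re c) : ℝ) : 𝕜))
    hN (by simpa using hS) hx

theorem apply_apply (h : IsSignOf S N) (x : V) : S (S x) = x := by
  obtain ⟨n, b, μ, hμ, -, hS⟩ := h
  suffices S ∘ₗ S = LinearMap.id from LinearMap.congr_fun this x
  refine b.ext fun i => ?_
  rw [LinearMap.comp_apply, hS, map_smul, hS, smul_smul, ← RCLike.ofReal_mul, ← SignType.coe_mul,
    ← sign_mul, sign_pos (mul_self_pos.2 (hμ i))]
  simp

theorem bilinear_apply_apply (h : IsSignOf S N) {M : Type*} [AddCommGroup M] [Module 𝕜 M]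
    (Φ : V →ₗ[𝕜] V →ₗ[𝕜] M) {NM : M → M} {SM : M →ₗ[𝕜] M}
    (hΦ : ∀ x y, Φ (N x) (N y) = NM (Φ x y))
    (hSM : ∀ (c : 𝕜) m, NM m = c • m → SM m = ((SignType.sign (RCLike.re c) : ℝ) : 𝕜) • m)
    (x y : V) : Φ (S x) (S y) = SM (Φ x y) := by
  obtain ⟨n, b, μ, -, hN, hS⟩ := h
  exact b.bilin_apply_apply_of_eigenbasis (f := fun c => ((SignType.sign (RCLike.re c) : ℝ) : 𝕜))
    Φ hN (by simpa using hS) hΦ hSM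
    (fun i j => by simpa using RCLike.sign_re_ofReal_mul (μ i) (μ j)) x y

theorem apply_lie {V : Type*} [LieRing V] [LieAlgebra 𝕜 V] {S N : V →ₗ[𝕜] V} (h : IsSignOf S N)
    (hN : ∀ x y, N ⁅x, y⁆ = ⁅N x, N y⁆) (x y : V) : S ⁅x, y⁆ = ⁅S x, S y⁆ :=
  (h.bilinear_apply_apply (LieAlgebra.ad 𝕜 V : V →ₗ[𝕜] V →ₗ[𝕜] V) (SM := S)
    (fun x y => (hN x y).symm) (fun _ _ => h.apply_eq_smul) x y).symm

theorem bilinForm_apply_apply (h : IsSignOf S N) (B : LinearMap.BilinForm 𝕜 V) (hN : ∀ x y, B (N x) (N y) = B x y)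
    (x y : V) : B (S x) (S y) = B x y :=
  h.bilinear_apply_apply B (NM := id) (SM := LinearMap.id) hN (fun c m hm => by
    rcases eq_or_ne m 0 with rfl | hm0
    · simp
    · have hc : c = 1 := (mul_eq_right₀ hm0).1 hm.symm
      simp [hc]) x y

theorem apply_semilinear_comm (h : IsSignOf S N) (σ : V →ₗ⋆[𝕜] V) (hσ : ∀ x, N (σ (N x)) = σ x)
    (x : V) : S (σ x) = σ (S x) := by
  obtain ⟨n, b, μ, hμ, hN, hS⟩ := id h
  suffices S.comp σ = σ.comp S from LinearMap.congr_fun this x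
  refine b.ext fun i => ?_
  have hσb : N (σ (b i)) = (((μ i)⁻¹ : ℝ) : 𝕜) • σ (b i) := by
    have := hσ (b i)
    rw [hN, map_smulₛₗ, RCLike.conj_ofReal, map_smul] at this
    conv_rhs => rw [← this]
    rw [smul_smul, ← RCLike.ofReal_mul, inv_mul_cancel₀ (hμ i), RCLike.ofReal_one, one_smul]
  rw [LinearMap.comp_apply, LinearMap.comp_apply, h.apply_eq_smul hσb, hS, map_smulₛₗ,
    RCLike.conj_ofReal, RCLike.ofReal_re, sign_inv]

end IsSignOf

end SignOperator

theorem LinearMap.IsSymmetric.exists_isSignOf {𝕜 E : Type*} [RCLike 𝕜]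
    [NormedAddCommGroup E] [InnerProductSpace 𝕜 E] [FiniteDimensional 𝕜 E] {N : E →ₗ[𝕜] E}
    (hN : N.IsSymmetric) (hNinj : Function.Injective N) :
    ∃ S : E →ₗ[𝕜] E, IsSignOf S N ∧ ∀ y ≠ 0, 0 < RCLike.re (inner 𝕜 y (S (N y))) := by
  set b := hN.eigenvectorBasis rfl
  set μ := hN.eigenvalues rfl
  have hNb : ∀ i, N (b.toBasis i) = (μ i : 𝕜) • b.toBasis i := fun i => by
    rw [OrthonormalBasis.coe_toBasis]
    exact hN.apply_eigenvectorBasis rfl i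
  have hμ : ∀ i, μ i ≠ 0 := fun i h0 =>
    b.orthonormal.ne_zero i (hNinj (by simpa [h0] using hNb i))
  set S := b.toBasis.constr 𝕜 fun i => ((SignType.sign (μ i) : ℝ) : 𝕜) • b.toBasis i
  have hSb : ∀ i, S (b.toBasis i) = ((SignType.sign (μ i) : ℝ) : 𝕜) • b.toBasis i :=
    b.toBasis.constr_basis 𝕜 _
  refine ⟨S, ⟨_, b.toBasis, μ, hμ, hNb, hSb⟩, fun y hy => ?_⟩
  refine b.re_inner_apply_pos_of_eigenbasis (T := S ∘ₗ N) (d := fun i => |μ i|)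
    (fun i => abs_pos.2 (hμ i)) (fun i => ?_) hy
  have := hSb i
  simp only [OrthonormalBasis.coe_toBasis] at this hNb
  rw [LinearMap.comp_apply, hNb, map_smul, this, smul_smul, ← RCLike.ofReal_mul, mul_comm,
    sign_mul_self]

open Complex (I I_mul_I I_ne_zero)

theorem lie_add_I_smul (a b c d : L) :
    ⁅a + I • b, c + I • d⁆ = (⁅a, c⁆ - ⁅b, d⁆) + I • (⁅a, d⁆ + ⁅b, c⁆) := by
  simp only [add_lie, lie_add, smul_lie, lie_smul, smul_smul, I_mul_I, neg_one_smul, smul_add]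
  abel

theorem LinearMap.BilinForm.apply_add_I_smul (B : LinearMap.BilinForm ℂ L) (a b c d : L) :
    B (a + I • b) (c + I • d) = (B a c - B b d) + I * (B a d + B b c) := by
  simp only [map_add, map_smul, LinearMap.add_apply, LinearMap.smul_apply, smul_eq_mul]
  linear_combination (B b d) * I_mul_I

theorem smul_add_I_smul (c : ℂ) (x y : L) :
    c • (x + I • y) = (c.re • x - c.im • y) + I • (c.im • x + c.re • y) := by
  conv_lhs => rw [← c.re_add_im]
  simp only [add_smul, mul_smul, smul_add, Complex.coe_smul, smul_comm I (_ : ℝ), smul_smul I I,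
    I_mul_I, neg_one_smul, smul_neg]
  abel

namespace IsRealForm

variable {g : LieSubalgebra ℝ L}

noncomputable def equivProd (hg : IsRealForm g) : (↥g × ↥g) ≃ₗ[ℝ] L :=
  LinearEquiv.ofBijective ((g.incl : ↥g →ₗ[ℝ] L).coprod (I • (g.incl : ↥g →ₗ[ℝ] L)))
    ⟨by
      rw [← LinearMap.ker_eq_bot, LinearMap.ker_eq_bot']
      rintro ⟨x, y⟩ hxy
      have hx : (x : L) = 0 :=
        hg.1 x x.2 _ (-y).2 (by simpa [eq_neg_iff_add_eq_zero] using hxy)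
      have hy : (y : L) = 0 := by simpa [hx, I_ne_zero] using hxy
      exact Prod.ext (Subtype.ext hx) (Subtype.ext hy),
    fun z => by
      obtain ⟨x, hx, y, hy, rfl⟩ := hg.2 z
      exact ⟨(⟨x, hx⟩, ⟨y, hy⟩), rfl⟩⟩

theorem equivProd_symm_add_I_smul (hg : IsRealForm g) (x y : ↥g) :
    hg.equivProd.symm (x + I • y) = (x, y) :=
  hg.equivProd.symm_apply_eq.2 rfl

theorem add_I_smul_inj (hg : IsRealForm g) {x y x' y' : ↥g}
    (h : (x : L) + I • (y : L) = x' + I • y') :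
    x = x' ∧ y = y' :=
  Prod.ext_iff.1 (hg.equivProd.injective (a₁ := (x, y)) (a₂ := (x', y')) h)

theorem exists_eq_add_I_smul (hg : IsRealForm g) (z : L) : ∃ x y : ↥g, z = x + I • y :=
  ⟨_, _, (hg.equivProd.apply_symm_apply z).symm⟩

noncomputable def conj (hg : IsRealForm g) : L →ₗ⋆[ℂ] L where
  toFun z := ((hg.equivProd.symm z).1 : L) - I • ((hg.equivProd.symm z).2 : L)
  map_add' z w := by
    simp only [map_add, Prod.fst_add, Prod.snd_add]
    push_cast
    rw [smul_add]
    abel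
  map_smul' c z := by
    obtain ⟨x, y, rfl⟩ := hg.exists_eq_add_I_smul z
    have h : c • ((x : L) + I • (y : L)) =
        ((c.re • x - c.im • y : ↥g) : L) + I • ((c.im • x + c.re • y : ↥g) : L) := by
      push_cast
      exact smul_add_I_smul c (x : L) (y : L)
    simp only [h, equivProd_symm_add_I_smul]
    rw [sub_eq_add_neg (x : L), ← smul_neg, smul_add_I_smul]
    push_cast
    simp only [Complex.conj_re, Complex.conj_im, neg_smul, smul_neg, smul_add]
    abel

theorem conj_add_I_smul (hg : IsRealForm g) (x y : ↥g) :
    hg.conj (x + I • y) = x - I • y := by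
  simp [conj, equivProd_symm_add_I_smul]

theorem conj_sub_I_smul (hg : IsRealForm g) (x y : ↥g) :
    hg.conj (x - I • y) = x + I • y := by
  simpa [sub_eq_add_neg] using hg.conj_add_I_smul x (-y)

theorem conj_conj (hg : IsRealForm g) (z : L) : hg.conj (hg.conj z) = z := by
  obtain ⟨x, y, rfl⟩ := hg.exists_eq_add_I_smul z
  rw [conj_add_I_smul, conj_sub_I_smul]

theorem conj_injective (hg : IsRealForm g) : Function.Injective hg.conj :=
  Function.LeftInverse.injective hg.conj_conj

theorem conj_eq_self_iff (hg : IsRealForm g) {z : L} : hg.conj z = z ↔ z ∈ g := by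
  obtain ⟨x, y, rfl⟩ := hg.exists_eq_add_I_smul z
  constructor
  · intro h
    have h' : (x : L) + I • (y : L) = x + I • ((-y : ↥g) : L) := by
      simpa [conj_add_I_smul, sub_eq_add_neg] using h.symm
    have hy : y = 0 := eq_zero_of_eq_neg (R := ℝ) (hg.add_I_smul_inj h').2
    simp [hy]
  · intro h
    simpa using hg.conj_add_I_smul ⟨_, h⟩ 0

theorem conj_lie (hg : IsRealForm g) (z w : L) : hg.conj ⁅z, w⁆ = ⁅hg.conj z, hg.conj w⁆ := by
  obtain ⟨x, y, rfl⟩ := hg.exists_eq_add_I_smul z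
  obtain ⟨x', y', rfl⟩ := hg.exists_eq_add_I_smul w
  have h : ⁅(x : L) + I • (y : L), (x' : L) + I • (y' : L)⁆ =
      ((⁅x, x'⁆ - ⁅y, y'⁆ : ↥g) : L) + I • ((⁅x, y'⁆ + ⁅y, x'⁆ : ↥g) : L) := by
    push_cast
    exact lie_add_I_smul _ _ _ _
  rw [h, conj_add_I_smul, conj_add_I_smul, conj_add_I_smul, sub_eq_add_neg (x : L),
    sub_eq_add_neg (x' : L), ← smul_neg, ← smul_neg, lie_add_I_smul]
  push_cast
  simp only [lie_neg, neg_lie, neg_neg, smul_add, smul_neg]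
  abel

end IsRealForm

theorem IsRealSlice.apply_conj_conj {B : LinearMap.BilinForm ℂ L} {g : LieSubalgebra ℝ L}
    (hg : IsRealSlice B g) (z w : L) :
    B (hg.1.conj z) (hg.1.conj w) = starRingEnd ℂ (B z w) := by
  obtain ⟨x, y, rfl⟩ := hg.1.exists_eq_add_I_smul z
  obtain ⟨x', y', rfl⟩ := hg.1.exists_eq_add_I_smul w
  have hreal : ∀ a b : ↥g, starRingEnd ℂ (B a b) = B a b := fun a b =>
    Complex.conj_eq_iff_im.2 (hg.2 a a.2 b b.2)
  rw [hg.1.conj_add_I_smul, hg.1.conj_add_I_smul, sub_eq_add_neg (x : L), sub_eq_add_neg (x' : L),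
    ← smul_neg, ← smul_neg, B.apply_add_I_smul, B.apply_add_I_smul]
  simp only [map_neg, LinearMap.neg_apply, map_add, map_sub, map_mul, Complex.conj_I, hreal]
  ring

namespace IsCartanInvolutionOfMetric

variable {B : LinearMap.BilinForm ℂ L} {g : LieSubalgebra ℝ L} {θ : ↥g →ₗ[ℝ] ↥g}

theorem apply_eq_zero_of_eigen (hθ : IsCartanInvolutionOfMetric B g θ) {a b : ↥g}
    (ha : θ a = a) (hb : θ b = -b) : B a b = 0 ∧ B b a = 0 := by
  have hab := hθ.2.1 a b
  have hba := hθ.2.1 b a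
  rw [ha, hb] at hab
  rw [ha, hb] at hba
  push_cast at hab hba
  simp only [map_neg, LinearMap.neg_apply] at hab hba
  exact ⟨by linear_combination hab / 2, by linear_combination -hba / 2⟩

theorem re_apply_self_pos (hθ : IsCartanInvolutionOfMetric B g θ) {a : ↥g} (ha : θ a = a)
    (h0 : a ≠ 0) : 0 < (B a a).re := by
  simpa [ha] using hθ.2.2 a h0

theorem re_apply_self_neg (hθ : IsCartanInvolutionOfMetric B g θ) {b : ↥g} (hb : θ b = -b)
    (h0 : b ≠ 0) : (B b b).re < 0 := by
  simpa [hb] using hθ.2.2 b h0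

end IsCartanInvolutionOfMetric

section CompactDual

variable {g : LieSubalgebra ℝ L}

def compactDual (θ : ↥g →ₗ[ℝ] ↥g) (hθ : ∀ x y : ↥g, θ ⁅x, y⁆ = ⁅θ x, θ y⁆) :
    LieSubalgebra ℝ L where
  carrier := {z | ∃ a b : ↥g, θ a = a ∧ θ b = -b ∧ z = a + I • b}
  zero_mem' := ⟨0, 0, by simp, by simp, by simp⟩
  add_mem' := by
    rintro _ _ ⟨a, b, ha, hb, rfl⟩ ⟨c, d, hc, hd, rfl⟩
    refine ⟨a + c, b + d, by simp [ha, hc], by simp [hb, hd, add_comm], ?_⟩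
    push_cast
    rw [smul_add]
    abel
  smul_mem' := by
    rintro r _ ⟨a, b, ha, hb, rfl⟩
    refine ⟨r • a, r • b, by simp [ha], by simp [hb], ?_⟩
    push_cast
    rw [smul_add, smul_comm r I]
  lie_mem' := by
    rintro _ _ ⟨a, b, ha, hb, rfl⟩ ⟨c, d, hc, hd, rfl⟩
    refine ⟨⁅a, c⁆ - ⁅b, d⁆, ⁅a, d⁆ + ⁅b, c⁆, by simp [hθ, ha, hb, hc, hd],
      by simp [hθ, ha, hb, hc, hd, add_comm], ?_⟩
    push_cast
    exact lie_add_I_smul _ _ _ _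

variable {θ : ↥g →ₗ[ℝ] ↥g}

theorem isRealForm_compactDual {hθ : ∀ x y : ↥g, θ ⁅x, y⁆ = ⁅θ x, θ y⁆} (hg : IsRealForm g)
    (hθinv : ∀ x, θ (θ x) = x) :
    IsRealForm (compactDual θ hθ) := by
  constructor
  · rintro _ ⟨a, b, ha, hb, rfl⟩ _ ⟨c, d, hc, hd, rfl⟩ h
    have h' : (a : L) + I • (b : L) = ((-d : ↥g) : L) + I • (c : L) := by
      rw [h, smul_add, smul_smul, I_mul_I, neg_one_smul, add_comm]
      push_cast
      rfl
    obtain ⟨rfl, rfl⟩ := hg.add_I_smul_inj h'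
    have hd0 : d = 0 :=
      eq_zero_of_eq_neg (R := ℝ) ((by simpa using ha.symm : d = θ d).trans hd)
    have hb0 : b = 0 := eq_zero_of_eq_neg (R := ℝ) (by rw [← hb, hc])
    simp [hd0, hb0]
  · intro z
    obtain ⟨x, y, rfl⟩ := hg.exists_eq_add_I_smul z
    obtain ⟨xk, xp, hxk, hxp, rfl⟩ := LinearMap.exists_add_eq_of_involutive hθinv x
    obtain ⟨yk, yp, hyk, hyp, rfl⟩ := LinearMap.exists_add_eq_of_involutive hθinv y
    refine ⟨_, ⟨xk, yp, hxk, hyp, rfl⟩, _, ⟨yk, -xp, hyk, by simp [hxp], rfl⟩, ?_⟩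
    push_cast
    simp only [smul_add, smul_neg, smul_smul, I_mul_I, neg_one_smul, neg_neg]
    abel

theorem isCompactRealForm_compactDual {B : LinearMap.BilinForm ℂ L} (hg : IsRealSlice B g)
    (hθ : IsCartanInvolutionOfLieAlgebras B g θ) : IsCompactRealForm B (compactDual θ hθ.2) := by
  obtain ⟨hθB, -⟩ := hθ
  refine ⟨⟨isRealForm_compactDual hg.1 hθB.1, ?_⟩, ?_⟩
  · rintro _ ⟨a, b, ha, hb, rfl⟩ _ ⟨c, d, hc, hd, rfl⟩
    rw [B.apply_add_I_smul, (hθB.apply_eq_zero_of_eigen ha hd).1,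
      (hθB.apply_eq_zero_of_eigen hc hb).2]
    simp [hg.2 a a.2 c c.2, hg.2 b b.2 d d.2]
  · rintro _ ⟨a, b, ha, hb, rfl⟩ h0
    rw [B.apply_add_I_smul, (hθB.apply_eq_zero_of_eigen ha hb).1,
      (hθB.apply_eq_zero_of_eigen ha hb).2]
    have hab : a ≠ 0 ∨ b ≠ 0 := by
      by_contra! h
      simp [h] at h0
    have hka : 0 ≤ (B a a).re := by
      rcases eq_or_ne a 0 with rfl | h
      · simp
      · exact (hθB.re_apply_self_pos ha h).le
    have hpb : (B b b).re ≤ 0 := by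
      rcases eq_or_ne b 0 with rfl | h
      · simp
      · exact (hθB.re_apply_self_neg hb h).le
    simp only [add_zero, mul_zero, Complex.sub_re]
    rcases hab with h | h
    · linarith [hθB.re_apply_self_pos ha h]
    · linarith [hθB.re_apply_self_neg hb h]

end CompactDual

theorem isCartanInvolutionOfLieAlgebras_restrict {B : LinearMap.BilinForm ℂ L}
    {g : LieSubalgebra ℝ L} {S : L →ₗ[ℂ] L} (hSg : ∀ x ∈ g, S x ∈ g) (hS : ∀ x, S (S x) = x)
    (hB : ∀ x y, B (S x) (S y) = B x y) (hpos : ∀ x ∈ g, x ≠ 0 → 0 < (B x (S x)).re)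
    (hlie : ∀ x y, S ⁅x, y⁆ = ⁅S x, S y⁆) :
    IsCartanInvolutionOfLieAlgebras B g ((S.restrictScalars ℝ).restrict hSg) := by
  refine ⟨⟨fun x => Subtype.ext (hS x), fun x y => ?_, fun x hx => ?_⟩,
    fun x y => Subtype.ext (hlie x y)⟩
  · show B (S x) y = B x (S y)
    rw [← hB, hS]
  · exact hpos x x.2 (by simpa using hx)

namespace IsCompactRealForm

variable {B : LinearMap.BilinForm ℂ L} {u : LieSubalgebra ℝ L}

theorem re_apply_self_nonneg (hu : IsCompactRealForm B u) {a : L} (ha : a ∈ u) :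
    0 ≤ (B a a).re := by
  rcases eq_or_ne a 0 with rfl | h
  · simp
  · exact (hu.2 a ha h).le

theorem re_apply_conj_self_pos (hu : IsCompactRealForm B u) (hBsymm : ∀ x y, B x y = B y x)
    {z : L} (hz : z ≠ 0) : 0 < (B (hu.1.1.conj z) z).re := by
  obtain ⟨a, b, rfl⟩ := hu.1.1.exists_eq_add_I_smul z
  rw [hu.1.1.conj_add_I_smul, sub_eq_add_neg, ← smul_neg, B.apply_add_I_smul]
  have hab : (a : L) ≠ 0 ∨ (b : L) ≠ 0 := by
    by_contra! h
    simp [h] at hz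
  have ha := hu.re_apply_self_nonneg a.2
  have hb := hu.re_apply_self_nonneg b.2
  simp only [map_neg, LinearMap.neg_apply, sub_neg_eq_add, hBsymm (b : L),
    add_neg_cancel, mul_zero, add_zero, Complex.add_re]
  rcases hab with h | h
  · linarith [hu.2 a a.2 h]
  · linarith [hu.2 b b.2 h]

noncomputable abbrev innerProductCore (hu : IsCompactRealForm B u)
    (hBsymm : ∀ x y, B x y = B y x) : InnerProductSpace.Core ℂ L where
  inner x y := B (hu.1.1.conj x) y
  conj_inner_symm x y := by rw [← hu.1.apply_conj_conj, hu.1.1.conj_conj, hBsymm]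
  re_inner_nonneg x := by
    rcases eq_or_ne x 0 with rfl | hx
    · simp
    · exact (hu.re_apply_conj_self_pos hBsymm hx).le
  definite x hx := by
    by_contra h
    simpa [hx] using hu.re_apply_conj_self_pos hBsymm h
  add_left x y z := by simp
  smul_left x y r := by simp

end IsCompactRealForm

theorem exists_cartanInvolution_of_isCompactRealForm [FiniteDimensional ℂ L]
    {B : LinearMap.BilinForm ℂ L} (hBsymm : ∀ x y, B x y = B y x) {g : LieSubalgebra ℝ L}
    (hg : IsRealSlice B g) {u : LieSubalgebra ℝ L} (hu : IsCompactRealForm B u) :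
    ∃ θ : ↥g →ₗ[ℝ] ↥g, IsCartanInvolutionOfLieAlgebras B g θ := by
  let core := hu.innerProductCore hBsymm
  let : NormedAddCommGroup L := core.toNormedAddCommGroup
  let : InnerProductSpace ℂ L := .ofCore core.toCore
  have hNsymm : (hg.1.conj.comp hu.1.1.conj).IsSymmetric := fun x y => by
    have h1 := hu.1.apply_conj_conj (hg.1.conj (hu.1.1.conj x)) (hu.1.1.conj y)
    have h2 := hg.apply_conj_conj (hu.1.1.conj x) (hg.1.conj (hu.1.1.conj y))
    rw [IsRealForm.conj_conj] at h1 h2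
    show B (hu.1.1.conj (hg.1.conj (hu.1.1.conj x))) y =
      B (hu.1.1.conj x) (hg.1.conj (hu.1.1.conj y))
    rw [h1, h2, Complex.conj_conj]
  have hNinj : Function.Injective (hg.1.conj.comp hu.1.1.conj) :=
    hg.1.conj_injective.comp hu.1.1.conj_injective
  obtain ⟨S, hS, hpos⟩ := hNsymm.exists_isSignOf hNinj
  have hSσ := hS.apply_semilinear_comm hg.1.conj (fun x => by simp [IsRealForm.conj_conj])
  refine ⟨_, isCartanInvolutionOfLieAlgebras_restrict (S := S) (fun x hx => ?_) hS.apply_apply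
    (hS.bilinForm_apply_apply B fun x y => ?_) (fun x hx hx0 => ?_) (hS.apply_lie fun x y => ?_)⟩
  · rw [← hg.1.conj_eq_self_iff] at hx ⊢
    rw [← hSσ, hx]
  · simp [hg.apply_conj_conj, hu.1.apply_conj_conj]
  · rw [← hg.1.conj_eq_self_iff] at hx
    have h := hpos (hu.1.1.conj x) (hu.1.1.conj_injective.ne_iff' (map_zero _) |>.2 hx0)
    change 0 < (B (hu.1.1.conj (hu.1.1.conj x))
      (S (hg.1.conj (hu.1.1.conj (hu.1.1.conj x))))).re at h
    rwa [IsRealForm.conj_conj, hx] at h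
  · simp [IsRealForm.conj_lie]

theorem exists_cartanInvolution_iff_exists_compactRealForm_general [FiniteDimensional ℂ L]
    (B : LinearMap.BilinForm ℂ L) (hBsymm : ∀ x y : L, B x y = B y x)
    (g : LieSubalgebra ℝ L) (hg : IsRealSlice B g) :
    (∃ θ : ↥g →ₗ[ℝ] ↥g, IsCartanInvolutionOfLieAlgebras B g θ) ↔
      ∃ u : LieSubalgebra ℝ L, IsCompactRealForm B u :=
  ⟨fun ⟨_, hθ⟩ => ⟨_, isCompactRealForm_compactDual hg hθ⟩,
    fun ⟨_, hu⟩ => exists_cartanInvolution_of_isCompactRealForm hBsymm hg hu⟩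

/-- If `g` is a real slice of `(L, B)`, then there exists a Cartan involution
of Lie algebras of `B|g` if and only if there exists a compact real form of `(L, B)`. -/
theorem exists_cartanInvolution_iff_exists_compactRealForm [FiniteDimensional ℂ L]
    (B : LinearMap.BilinForm ℂ L) (hBsymm : ∀ x y : L, B x y = B y x)
    (hBnd : B.Nondegenerate) (g : LieSubalgebra ℝ L) (hg : IsRealSlice B g) :
    (∃ θ : ↥g →ₗ[ℝ] ↥g, IsCartanInvolutionOfLieAlgebras B g θ) ↔
      ∃ u : LieSubalgebra ℝ L, IsCompactRealForm B u :=
  exists_cartanInvolution_iff_exists_compactRealForm_general B hBsymm g hg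
end
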